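/- Let N = p + ℓ with p, ℓ ≥ 1, let U, Û ∈ ℝ^{N×r} each have orthonormal columns, and let Υ_f, Υ̂_f ∈ ℝ^{p×r} denote the submatrices of the first p rows of U and Û. Assume rank(Υ_f) = r and η := 2 sin θ_max · ‖Υ_f^†‖₂ < 1, where sin θ_max = ‖(I − UUᵀ)ÛÛᵀ‖₂. Then Υ̂_f has rank r and ‖Υ̂_f^†‖₂ ≤ ‖Υ_f^†‖₂ / (1 − η); equivalently, σ_r(Υ̂_f) ≥ (1 − η) σ_r(Υ_f). -/

import Mathlib

open Matrix

/-- The spectral (operator 2-) norm of a real matrix. -/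
noncomputable def spNorm {m n : ℕ} (M : Matrix (Fin m) (Fin n) ℝ) : ℝ :=
  ‖LinearMap.toContinuousLinearMap (Matrix.toEuclideanLin M)‖

/-- The Moore–Penrose pseudoinverse of a full-column-rank real matrix,
`M^† = (MᵀM)⁻¹Mᵀ`. -/
noncomputable def pinv {m n : ℕ} (M : Matrix (Fin m) (Fin n) ℝ) : Matrix (Fin n) (Fin m) ℝ :=
  (Mᵀ * M)⁻¹ * Mᵀ

/-- The smallest singular value of a real matrix, `σ_min(M) = √(λ_min(MᵀM))`. -/
noncomputable def sigmaMin {m n : ℕ} (M : Matrix (Fin m) (Fin n) ℝ) : ℝ :=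
  Real.sqrt (⨅ i, (show (Mᵀ * M).IsHermitian by
    simpa using Matrix.isHermitian_conjTranspose_mul_self M).eigenvalues i)

/-- The submatrix of the first `p` rows of a `(p+l) × r` matrix. -/
def firstRows {p l r : ℕ} (U : Matrix (Fin (p + l)) (Fin r) ℝ) : Matrix (Fin p) (Fin r) ℝ :=
  U.submatrix (fun i => Fin.castAdd l i) id

/-!
Put `S = (1 - UUᵀ)ÛÛᵀ` and `C = UᵀÛ`. Then `Û = UC + SÛ`, hence `Υ̂_f = Υ_f C + (SÛ)_f`.
Since `σ_min(A + E) ≥ σ_min(A) - ‖E‖` and `σ_min(AB) ≥ σ_min(A) σ_min(B)`, this gives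
`σ_min(C) ≥ 1 - ‖S‖` and `σ_min(Υ̂_f) ≥ σ_min(Υ_f)(1 - ‖S‖) - ‖S‖ ≥ (1 - η) σ_min(Υ_f)`, the last
step because `σ_min(Υ_f) ≤ 1 ≤ σ_min(Υ_f) ‖Υ_f^†‖`. A positive `σ_min(M)` forces full column rank
and `‖M^†‖ ≤ σ_min(M)⁻¹`, as `MM^†` is an orthogonal projection.
-/

open scoped RealInnerProductSpace Matrix.Norms.L2Operator

namespace Matrix.IsHermitian

variable {n : Type*} [Fintype n] [DecidableEq n] {A : Matrix n n ℝ}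

lemma toEuclideanLin_eigenvectorBasis (hA : A.IsHermitian) (i : n) :
    toEuclideanLin A (hA.eigenvectorBasis i) = hA.eigenvalues i • hA.eigenvectorBasis i :=
  congrArg (WithLp.toLp 2) (hA.mulVec_eigenvectorBasis i)

lemma inner_toEuclideanLin_self_eq_sum (hA : A.IsHermitian) (x : EuclideanSpace ℝ n) :
    ⟪x, toEuclideanLin A x⟫ = ∑ i, hA.eigenvalues i * ⟪hA.eigenvectorBasis i, x⟫ ^ 2 := by
  rw [← hA.eigenvectorBasis.sum_inner_mul_inner]
  refine Finset.sum_congr rfl fun i _ => ?_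
  rw [← isSymmetric_toEuclideanLin_iff.mpr hA, hA.toEuclideanLin_eigenvectorBasis,
    real_inner_smul_left, real_inner_comm x]
  ring

lemma iInf_eigenvalues_mul_norm_sq_le (hA : A.IsHermitian) (x : EuclideanSpace ℝ n) :
    (⨅ i, hA.eigenvalues i) * ‖x‖ ^ 2 ≤ ⟪x, toEuclideanLin A x⟫ := by
  rw [hA.inner_toEuclideanLin_self_eq_sum, ← hA.eigenvectorBasis.sum_sq_inner_right,
    Finset.mul_sum]
  exact Finset.sum_le_sum fun i _ =>
    mul_le_mul_of_nonneg_right (ciInf_le (Finite.bddBelow_range _) i) (sq_nonneg _)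

lemma exists_inner_toEuclideanLin_self_eq_iInf [Nonempty n] (hA : A.IsHermitian) :
    ∃ x : EuclideanSpace ℝ n, ‖x‖ = 1 ∧ ⟪x, toEuclideanLin A x⟫ = ⨅ i, hA.eigenvalues i := by
  obtain ⟨i₀, hi₀⟩ := Finite.exists_min hA.eigenvalues
  refine ⟨hA.eigenvectorBasis i₀, hA.eigenvectorBasis.orthonormal.1 i₀, ?_⟩
  rw [hA.toEuclideanLin_eigenvectorBasis, real_inner_smul_right, real_inner_self_eq_norm_sq,
    hA.eigenvectorBasis.orthonormal.1 i₀, one_pow, mul_one]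
  exact le_antisymm (le_ciInf hi₀) (ciInf_le (Finite.bddBelow_range _) i₀)

end Matrix.IsHermitian

namespace Matrix

variable {m n k : Type*}

lemma norm_toEuclideanLin_le [Fintype m] [Fintype n] [DecidableEq n] (A : Matrix m n ℝ)
    (x : EuclideanSpace ℝ n) : ‖toEuclideanLin A x‖ ≤ ‖A‖ * ‖x‖ :=
  (toEuclideanLin.trans LinearMap.toContinuousLinearMap A).le_opNorm x

lemma l2_opNorm_le_of_forall [Fintype m] [Fintype n] [DecidableEq n] {A : Matrix m n ℝ} {c : ℝ}
    (hc : 0 ≤ c) (h : ∀ x, ‖toEuclideanLin A x‖ ≤ c * ‖x‖) : ‖A‖ ≤ c :=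
  ContinuousLinearMap.opNorm_le_bound _ hc h

lemma toEuclideanLin_mul_apply [Fintype n] [DecidableEq n] [Fintype k] [DecidableEq k]
    (A : Matrix m n ℝ) (B : Matrix n k ℝ) (x : EuclideanSpace ℝ k) :
    toEuclideanLin (A * B) x = toEuclideanLin A (toEuclideanLin B x) := by
  simp

lemma norm_toEuclideanLin_sq [Fintype m] [DecidableEq m] [Fintype n] [DecidableEq n]
    (M : Matrix m n ℝ) (x : EuclideanSpace ℝ n) :
    ‖toEuclideanLin M x‖ ^ 2 = ⟪x, toEuclideanLin (Mᵀ * M) x⟫ := by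
  rw [toEuclideanLin_mul_apply, ← conjTranspose_eq_transpose_of_trivial,
    toEuclideanLin_conjTranspose_eq_adjoint, LinearMap.adjoint_inner_right,
    real_inner_self_eq_norm_sq]

lemma isHermitian_transpose_mul_self [Fintype m] (M : Matrix m n ℝ) : (Mᵀ * M).IsHermitian := by
  simpa using isHermitian_conjTranspose_mul_self M

section Orthonormal

variable [Fintype m] [DecidableEq m] [Fintype n] [DecidableEq n] {U : Matrix m n ℝ}

lemma norm_toEuclideanLin_of_transpose_mul_self_eq_one (hU : Uᵀ * U = 1)
    (x : EuclideanSpace ℝ n) : ‖toEuclideanLin U x‖ = ‖x‖ := by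
  rw [← pow_left_inj₀ (norm_nonneg _) (norm_nonneg _) two_ne_zero, norm_toEuclideanLin_sq, hU,
    toLpLin_one, LinearMap.id_apply, real_inner_self_eq_norm_sq]

lemma l2_opNorm_le_one_of_transpose_mul_self_eq_one (hU : Uᵀ * U = 1) : ‖U‖ ≤ 1 :=
  l2_opNorm_le_of_forall zero_le_one fun x => by
    rw [norm_toEuclideanLin_of_transpose_mul_self_eq_one hU, one_mul]

end Orthonormal

lemma l2_opNorm_le_one_of_transpose_mul_self_eq_self [Fintype n] [DecidableEq n]
    {P : Matrix n n ℝ} (hP : Pᵀ * P = P) : ‖P‖ ≤ 1 := by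
  have h : ‖P‖ * ‖P‖ = ‖P‖ := by
    rw [← l2_opNorm_conjTranspose_mul_self, conjTranspose_eq_transpose_of_trivial, hP]
  nlinarith [norm_nonneg P]

lemma rank_eq_card_iff_mulVec_injective {K : Type*} [Field K] [Fintype n] (M : Matrix m n K) :
    M.rank = Fintype.card n ↔ Function.Injective M.mulVec := by
  rw [mulVec_injective_iff, linearIndependent_iff_card_eq_finrank_span, rank_eq_finrank_span_cols,
    Set.finrank, eq_comm]

lemma isUnit_transpose_mul_self_of_rank_eq [Fintype m] [Fintype n] [DecidableEq n]
    {M : Matrix m n ℝ} (h : M.rank = Fintype.card n) : IsUnit (Mᵀ * M) := by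
  rw [← mulVec_injective_iff_isUnit, ← rank_eq_card_iff_mulVec_injective, rank_transpose_mul_self,
    h]

end Matrix

lemma spNorm_eq_l2_opNorm {m n : ℕ} (M : Matrix (Fin m) (Fin n) ℝ) : spNorm M = ‖M‖ := rfl

section SigmaMin

variable {m n k : ℕ}

lemma sigmaMin_sq (M : Matrix (Fin m) (Fin n) ℝ) :
    sigmaMin M ^ 2 = ⨅ i, (isHermitian_transpose_mul_self M).eigenvalues i :=
  Real.sq_sqrt (Real.iInf_nonneg fun i => by
    simpa using eigenvalues_conjTranspose_mul_self_nonneg M i)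

lemma sigmaMin_nonneg (M : Matrix (Fin m) (Fin n) ℝ) : 0 ≤ sigmaMin M := Real.sqrt_nonneg _

lemma sigmaMin_of_isEmpty [IsEmpty (Fin n)] (M : Matrix (Fin m) (Fin n) ℝ) : sigmaMin M = 0 := by
  rw [sigmaMin, iInf_of_isEmpty, Real.sInf_empty, Real.sqrt_zero]

lemma sigmaMin_mul_norm_le (M : Matrix (Fin m) (Fin n) ℝ) (x : EuclideanSpace ℝ (Fin n)) :
    sigmaMin M * ‖x‖ ≤ ‖toEuclideanLin M x‖ := by
  rw [← pow_le_pow_iff_left₀ (mul_nonneg (sigmaMin_nonneg M) (norm_nonneg x)) (norm_nonneg _)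
    two_ne_zero, mul_pow, sigmaMin_sq, norm_toEuclideanLin_sq]
  exact (isHermitian_transpose_mul_self M).iInf_eigenvalues_mul_norm_sq_le x

lemma exists_norm_toEuclideanLin_eq_sigmaMin [Nonempty (Fin n)] (M : Matrix (Fin m) (Fin n) ℝ) :
    ∃ x : EuclideanSpace ℝ (Fin n), ‖x‖ = 1 ∧ ‖toEuclideanLin M x‖ = sigmaMin M := by
  obtain ⟨x, hx, hxM⟩ := (isHermitian_transpose_mul_self M).exists_inner_toEuclideanLin_self_eq_iInf
  refine ⟨x, hx, ?_⟩
  rw [← pow_left_inj₀ (norm_nonneg _) (sigmaMin_nonneg M) two_ne_zero, sigmaMin_sq,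
    norm_toEuclideanLin_sq, hxM]

lemma le_sigmaMin [Nonempty (Fin n)] {M : Matrix (Fin m) (Fin n) ℝ} {c : ℝ}
    (h : ∀ x, c * ‖x‖ ≤ ‖toEuclideanLin M x‖) : c ≤ sigmaMin M := by
  obtain ⟨x, hx, hMx⟩ := exists_norm_toEuclideanLin_eq_sigmaMin M
  simpa [hx, hMx] using h x

lemma sigmaMin_le_l2_opNorm [Nonempty (Fin n)] (M : Matrix (Fin m) (Fin n) ℝ) :
    sigmaMin M ≤ ‖M‖ := by
  obtain ⟨x, hx, hMx⟩ := exists_norm_toEuclideanLin_eq_sigmaMin M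
  simpa [hx, hMx] using norm_toEuclideanLin_le M x

lemma sigmaMin_mul_le [Nonempty (Fin k)] (A : Matrix (Fin m) (Fin n) ℝ)
    (B : Matrix (Fin n) (Fin k) ℝ) : sigmaMin (A * B) ≤ ‖A‖ * sigmaMin B := by
  obtain ⟨x, hx, hBx⟩ := exists_norm_toEuclideanLin_eq_sigmaMin B
  calc sigmaMin (A * B) = sigmaMin (A * B) * ‖x‖ := by rw [hx, mul_one]
    _ ≤ ‖toEuclideanLin A (toEuclideanLin B x)‖ := by
      rw [← toEuclideanLin_mul_apply]; exact sigmaMin_mul_norm_le _ x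
    _ ≤ ‖A‖ * sigmaMin B := hBx ▸ norm_toEuclideanLin_le A _

lemma sigmaMin_mul_sigmaMin_le [Nonempty (Fin k)] (A : Matrix (Fin m) (Fin n) ℝ)
    (B : Matrix (Fin n) (Fin k) ℝ) : sigmaMin A * sigmaMin B ≤ sigmaMin (A * B) :=
  le_sigmaMin fun x => calc
    sigmaMin A * sigmaMin B * ‖x‖ ≤ sigmaMin A * ‖toEuclideanLin B x‖ := by
      rw [mul_assoc]
      exact mul_le_mul_of_nonneg_left (sigmaMin_mul_norm_le B x) (sigmaMin_nonneg A)
    _ ≤ ‖toEuclideanLin (A * B) x‖ := by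
      rw [toEuclideanLin_mul_apply]; exact sigmaMin_mul_norm_le A _

lemma sigmaMin_sub_le_sigmaMin_add [Nonempty (Fin n)] (A E : Matrix (Fin m) (Fin n) ℝ) :
    sigmaMin A - ‖E‖ ≤ sigmaMin (A + E) :=
  le_sigmaMin fun x => by
    have hA := sigmaMin_mul_norm_le A x
    have hE := norm_toEuclideanLin_le E x
    have hAE : ‖toEuclideanLin A x‖ ≤ ‖toEuclideanLin (A + E) x‖ + ‖toEuclideanLin E x‖ := by
      simpa using norm_sub_le (toEuclideanLin (A + E) x) (toEuclideanLin E x)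
    linarith

lemma sigmaMin_mul_l2_opNorm_le (A : Matrix (Fin m) (Fin n) ℝ) (B : Matrix (Fin n) (Fin k) ℝ) :
    sigmaMin A * ‖B‖ ≤ ‖A * B‖ := by
  rcases (sigmaMin_nonneg A).eq_or_lt with hA | hA
  · simp [← hA]
  rw [← le_div_iff₀' hA]
  refine l2_opNorm_le_of_forall (by positivity) fun x => ?_
  rw [div_mul_eq_mul_div, le_div_iff₀' hA]
  calc sigmaMin A * ‖toEuclideanLin B x‖ ≤ ‖toEuclideanLin (A * B) x‖ := by
        rw [toEuclideanLin_mul_apply]; exact sigmaMin_mul_norm_le A _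
    _ ≤ ‖A * B‖ * ‖x‖ := norm_toEuclideanLin_le _ x

lemma one_le_sigmaMin_of_transpose_mul_self_eq_one [Nonempty (Fin n)]
    {U : Matrix (Fin m) (Fin n) ℝ} (hU : Uᵀ * U = 1) : 1 ≤ sigmaMin U :=
  le_sigmaMin fun x => by rw [norm_toEuclideanLin_of_transpose_mul_self_eq_one hU, one_mul]

lemma rank_eq_of_sigmaMin_pos {M : Matrix (Fin m) (Fin n) ℝ} (h : 0 < sigmaMin M) :
    M.rank = n := by
  suffices Function.Injective M.mulVecLin by
    simpa using (rank_eq_card_iff_mulVec_injective M).mpr this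
  refine (injective_iff_map_eq_zero _).mpr fun x hx => ?_
  have hMx : toEuclideanLin M (WithLp.toLp 2 x) = 0 := congrArg (WithLp.toLp 2) hx
  have := sigmaMin_mul_norm_le M (WithLp.toLp 2 x)
  rw [hMx, norm_zero] at this
  simpa using (mul_nonpos_iff_pos_imp_nonpos.mp this).1 h

end SigmaMin

section Pinv

variable {m n : ℕ} {M : Matrix (Fin m) (Fin n) ℝ}

lemma pinv_mul_self (h : IsUnit (Mᵀ * M)) : pinv M * M = 1 := by
  rw [pinv, Matrix.mul_assoc, nonsing_inv_mul _ ((isUnit_iff_isUnit_det _).mp h)]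

lemma transpose_mul_pinv (M : Matrix (Fin m) (Fin n) ℝ) : (M * pinv M)ᵀ = M * pinv M := by
  simp [pinv, transpose_nonsing_inv, Matrix.mul_assoc]

lemma l2_opNorm_mul_pinv_le_one (h : IsUnit (Mᵀ * M)) : ‖M * pinv M‖ ≤ 1 := by
  refine l2_opNorm_le_one_of_transpose_mul_self_eq_self ?_
  rw [transpose_mul_pinv, Matrix.mul_assoc, ← Matrix.mul_assoc (pinv M), pinv_mul_self h,
    Matrix.one_mul]

lemma l2_opNorm_pinv_le (h : 0 < sigmaMin M) : ‖pinv M‖ ≤ (sigmaMin M)⁻¹ := by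
  have hM : IsUnit (Mᵀ * M) :=
    isUnit_transpose_mul_self_of_rank_eq (by simpa using rank_eq_of_sigmaMin_pos h)
  rw [← mul_one (sigmaMin M)⁻¹, le_inv_mul_iff₀ h]
  exact (sigmaMin_mul_l2_opNorm_le M (pinv M)).trans (l2_opNorm_mul_pinv_le_one hM)

lemma one_le_sigmaMin_mul_l2_opNorm_pinv [Nonempty (Fin n)] (h : IsUnit (Mᵀ * M)) :
    1 ≤ sigmaMin M * ‖pinv M‖ :=
  calc 1 ≤ sigmaMin (pinv M * M) := by
        rw [pinv_mul_self h]; exact one_le_sigmaMin_of_transpose_mul_self_eq_one (by simp)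
    _ ≤ ‖pinv M‖ * sigmaMin M := sigmaMin_mul_le _ _
    _ = sigmaMin M * ‖pinv M‖ := mul_comm _ _

end Pinv

section FirstRows

variable {p l n r : ℕ}

lemma firstRows_add (A B : Matrix (Fin (p + l)) (Fin r) ℝ) :
    firstRows (A + B) = firstRows A + firstRows B := rfl

lemma firstRows_mul (A : Matrix (Fin (p + l)) (Fin n) ℝ) (B : Matrix (Fin n) (Fin r) ℝ) :
    firstRows (A * B) = firstRows A * B := rfl

lemma l2_opNorm_firstRows_one_le :
    ‖firstRows (1 : Matrix (Fin (p + l)) (Fin (p + l)) ℝ)‖ ≤ 1 := by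
  rw [← l2_opNorm_conjTranspose, conjTranspose_eq_transpose_of_trivial]
  refine l2_opNorm_le_one_of_transpose_mul_self_eq_one ?_
  rw [transpose_transpose, firstRows, transpose_submatrix,
    ← submatrix_mul _ _ _ _ _ Function.bijective_id, transpose_one, Matrix.one_mul,
    submatrix_one _ (Fin.castAdd_injective p l)]

lemma l2_opNorm_firstRows_le (A : Matrix (Fin (p + l)) (Fin r) ℝ) : ‖firstRows A‖ ≤ ‖A‖ :=
  calc ‖firstRows A‖ = ‖firstRows 1 * A‖ := by rw [← firstRows_mul, Matrix.one_mul]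
    _ ≤ ‖firstRows 1‖ * ‖A‖ := l2_opNorm_mul _ _
    _ ≤ ‖A‖ := mul_le_of_le_one_left (norm_nonneg _) l2_opNorm_firstRows_one_le

end FirstRows

section Perturbation

variable {p l r : ℕ} {U Uh : Matrix (Fin (p + l)) (Fin r) ℝ}

lemma eq_mul_transpose_mul_add (hUh : Uhᵀ * Uh = 1) :
    Uh = U * (Uᵀ * Uh) + (1 - U * Uᵀ) * (Uh * Uhᵀ) * Uh := by
  rw [Matrix.mul_assoc _ (Uh * Uhᵀ), Matrix.mul_assoc Uh, hUh, Matrix.mul_one, Matrix.sub_mul,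
    Matrix.one_mul, Matrix.mul_assoc]
  abel

lemma sigmaMin_firstRows_mul_one_sub_sub_le [Nonempty (Fin r)] (hU : Uᵀ * U = 1)
    (hUh : Uhᵀ * Uh = 1) :
    sigmaMin (firstRows U) * (1 - ‖(1 - U * Uᵀ) * (Uh * Uhᵀ)‖) - ‖(1 - U * Uᵀ) * (Uh * Uhᵀ)‖ ≤
      sigmaMin (firstRows Uh) := by
  set S := (1 - U * Uᵀ) * (Uh * Uhᵀ)
  set C := Uᵀ * Uh
  have hdecomp : Uh = U * C + S * Uh := eq_mul_transpose_mul_add hUh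
  have hSUh : ‖S * Uh‖ ≤ ‖S‖ := (l2_opNorm_mul S Uh).trans
    (mul_le_of_le_one_right (norm_nonneg S) (l2_opNorm_le_one_of_transpose_mul_self_eq_one hUh))
  have hC : 1 - ‖S‖ ≤ sigmaMin C :=
    calc 1 - ‖S‖ ≤ sigmaMin Uh - ‖-(S * Uh)‖ := by
          rw [norm_neg]; linarith [one_le_sigmaMin_of_transpose_mul_self_eq_one hUh]
      _ ≤ sigmaMin (Uh + -(S * Uh)) := sigmaMin_sub_le_sigmaMin_add _ _
      _ = sigmaMin (U * C) := by rw [← sub_eq_add_neg, ← eq_sub_of_add_eq hdecomp.symm]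
      _ ≤ ‖U‖ * sigmaMin C := sigmaMin_mul_le U C
      _ ≤ sigmaMin C := mul_le_of_le_one_left (sigmaMin_nonneg C)
          (l2_opNorm_le_one_of_transpose_mul_self_eq_one hU)
  calc sigmaMin (firstRows U) * (1 - ‖S‖) - ‖S‖
      ≤ sigmaMin (firstRows U) * sigmaMin C - ‖firstRows (S * Uh)‖ := by
        gcongr
        · exact sigmaMin_nonneg _
        · exact (l2_opNorm_firstRows_le _).trans hSUh
    _ ≤ sigmaMin (firstRows U * C) - ‖firstRows (S * Uh)‖ := by
        gcongr; exact sigmaMin_mul_sigmaMin_le _ _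
    _ ≤ sigmaMin (firstRows U * C + firstRows (S * Uh)) := sigmaMin_sub_le_sigmaMin_add _ _
    _ = sigmaMin (firstRows Uh) := by rw [← firstRows_mul, ← firstRows_add, ← hdecomp]

end Perturbation

theorem pinv_norm_perturbation_general (p l r : ℕ)
    (U Uh : Matrix (Fin (p + l)) (Fin r) ℝ)
    (hU : Uᵀ * U = 1) (hUh : Uhᵀ * Uh = 1)
    (hrank : (firstRows U).rank = r)
    (hη : 2 * spNorm ((1 - U * Uᵀ) * (Uh * Uhᵀ)) * spNorm (pinv (firstRows U)) < 1) :
    (firstRows Uh).rank = r ∧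
    spNorm (pinv (firstRows Uh)) ≤
      spNorm (pinv (firstRows U)) /
        (1 - 2 * spNorm ((1 - U * Uᵀ) * (Uh * Uhᵀ)) * spNorm (pinv (firstRows U))) ∧
    sigmaMin (firstRows Uh) ≥
      (1 - 2 * spNorm ((1 - U * Uᵀ) * (Uh * Uhᵀ)) * spNorm (pinv (firstRows U))) *
        sigmaMin (firstRows U) := by
  simp only [spNorm_eq_l2_opNorm] at hη ⊢
  obtain rfl | hr := Nat.eq_zero_or_pos r
  · refine ⟨Nat.le_zero.mp (rank_le_width _), ?_, by simp [sigmaMin_of_isEmpty]⟩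
    rw [Subsingleton.elim (pinv (firstRows Uh)) 0, norm_zero]
    exact div_nonneg (norm_nonneg _) (by linarith)
  have : Nonempty (Fin r) := Fin.pos_iff_nonempty.mp hr
  set s := ‖(1 - U * Uᵀ) * (Uh * Uhᵀ)‖
  set k := ‖pinv (firstRows U)‖
  set σ := sigmaMin (firstRows U)
  have hσk : 1 ≤ σ * k := one_le_sigmaMin_mul_l2_opNorm_pinv
    (isUnit_transpose_mul_self_of_rank_eq (by rwa [Fintype.card_fin]))
  have hσ1 : σ ≤ 1 := (sigmaMin_le_l2_opNorm _).trans
    ((l2_opNorm_firstRows_le U).trans (l2_opNorm_le_one_of_transpose_mul_self_eq_one hU))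
  have hσ : 0 < σ := by
    by_contra! h
    nlinarith [sigmaMin_nonneg (firstRows U), norm_nonneg (pinv (firstRows U))]
  have hσh : (1 - 2 * s * k) * σ ≤ sigmaMin (firstRows Uh) := by
    nlinarith [sigmaMin_firstRows_mul_one_sub_sub_le hU hUh,
      norm_nonneg ((1 - U * Uᵀ) * (Uh * Uhᵀ))]
  have hσh_pos : 0 < sigmaMin (firstRows Uh) := (mul_pos (by linarith) hσ).trans_le hσh
  refine ⟨rank_eq_of_sigmaMin_pos hσh_pos, ?_, hσh⟩
  calc ‖pinv (firstRows Uh)‖ ≤ (sigmaMin (firstRows Uh))⁻¹ := l2_opNorm_pinv_le hσh_pos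
    _ ≤ ((1 - 2 * s * k) * σ)⁻¹ := inv_anti₀ (mul_pos (by linarith) hσ) hσh
    _ ≤ k / (1 - 2 * s * k) := by
      rw [mul_inv, div_eq_mul_inv, mul_comm k]
      exact mul_le_mul_of_nonneg_left ((inv_le_iff_one_le_mul₀' hσ).mpr hσk) (by simp; linarith)

/-- If `rank Υ_f = r` and `η = 2 sin θ_max ‖Υ_f^†‖₂ < 1`, then
`Υ̂_f` has rank `r` and `‖Υ̂_f^†‖₂ ≤ ‖Υ_f^†‖₂/(1 − η)`; equivalently
`σ_r(Υ̂_f) ≥ (1 − η) σ_r(Υ_f)`. -/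
theorem pinv_norm_perturbation (p l r : ℕ) (hp : 1 ≤ p) (hl : 1 ≤ l)
    (U Uh : Matrix (Fin (p + l)) (Fin r) ℝ)
    (hU : Uᵀ * U = 1) (hUh : Uhᵀ * Uh = 1)
    (hrank : (firstRows U).rank = r)
    (hη : 2 * spNorm ((1 - U * Uᵀ) * (Uh * Uhᵀ)) * spNorm (pinv (firstRows U)) < 1) :
    (firstRows Uh).rank = r ∧
    spNorm (pinv (firstRows Uh)) ≤
      spNorm (pinv (firstRows U)) /
        (1 - 2 * spNorm ((1 - U * Uᵀ) * (Uh * Uhᵀ)) * spNorm (pinv (firstRows U))) ∧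
    sigmaMin (firstRows Uh) ≥
      (1 - 2 * spNorm ((1 - U * Uᵀ) * (Uh * Uhᵀ)) * spNorm (pinv (firstRows U))) *
        sigmaMin (firstRows U) :=
  pinv_norm_perturbation_general p l r U Uh hU hUh hrank hη
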